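/- arXiv:1505.05530 — 2 statements merged into one kernel-verified Lean document; each statement's English description precedes it below -/
import Mathlib

section
/- On ℂⁿ viewed as ℝ^{2n} with coordinates (q^k, p_k), for Hermitian matrices A and B, the Poisson bracket of the quadratic functions f_A(ψ) = ½⟨ψ|Aψ⟩ and f_B(ψ) = ½⟨ψ|Bψ⟩ with respect to the canonical Poisson bivector Ω = Σ_k ∂/∂q^k ∧ ∂/∂p_k equals f_{[A,B]}, where [A,B] = −i(AB − BA). -/
/-!
For Hermitian `A` the differential of `f_A` at `ψ` is `v ↦ Re ⟨v|Aψ⟩`, so `∂f_A/∂q^k = Re (Aψ)_k`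
and `∂f_A/∂p_k = Im (Aψ)_k`. The bracket is therefore `Im ⟨Aψ|Bψ⟩ = Im ⟨ψ|ABψ⟩`, while
`⟨ψ|BAψ⟩` is the complex conjugate of `⟨ψ|ABψ⟩`, so `f_{[A,B]}(ψ) = ½ Re (-i (s - s̄)) = Im s`
for `s = ⟨ψ|ABψ⟩`.
-/

open Matrix Complex

noncomputable section

/-- Identify a point of `ℝⁿ × ℝⁿ` (coordinates `(q, p)`) with a vector of `ℂⁿ`
via `z^k = q^k + i p^k`. -/
def toVecC {n : ℕ} (x : (Fin n → ℝ) × (Fin n → ℝ)) : Fin n → ℂ :=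
  fun k => ⟨x.1 k, x.2 k⟩

/-- The real quadratic function `f_A(ψ) = ½⟨ψ|Aψ⟩` associated to a (Hermitian)
matrix `A`, viewed as a function on `ℝⁿ × ℝⁿ ≅ ℂⁿ`. -/
def quadFun {n : ℕ} (A : Matrix (Fin n) (Fin n) ℂ)
    (x : (Fin n → ℝ) × (Fin n → ℝ)) : ℝ :=
  ((1 / 2 : ℂ) * (star (toVecC x) ⬝ᵥ A.mulVec (toVecC x))).re

section DotProduct

variable {ι R : Type*} [Fintype ι] [NonUnitalSemiring R] [StarRing R]

theorem Matrix.star_mulVec_dotProduct (M : Matrix ι ι R) (z w : ι → R) :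
    star (M *ᵥ z) ⬝ᵥ w = star z ⬝ᵥ Mᴴ *ᵥ w := by
  rw [star_mulVec, dotProduct_mulVec]

theorem Matrix.star_star_dotProduct_mulVec (M : Matrix ι ι R) (z w : ι → R) :
    star (star w ⬝ᵥ M *ᵥ z) = star z ⬝ᵥ Mᴴ *ᵥ w := by
  rw [← star_dotProduct, star_mulVec_dotProduct]

end DotProduct

theorem Complex.im_star_dotProduct {ι : Type*} [Fintype ι] (u v : ι → ℂ) :
    (star u ⬝ᵥ v).im = ∑ k, ((u k).re * (v k).im - (u k).im * (v k).re) := by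
  simp only [dotProduct, im_sum, Pi.star_apply, star_def, mul_im, conj_re, conj_im]
  exact Finset.sum_congr rfl fun k _ => by ring

namespace QuadFun

def toVecCL (n : ℕ) : ((Fin n → ℝ) × (Fin n → ℝ)) →L[ℝ] (Fin n → ℂ) :=
  LinearMap.toContinuousLinearMap
    { toFun := toVecC
      map_add' := fun _ _ => funext fun _ => Complex.ext (by simp [toVecC]) (by simp [toVecC])
      map_smul' := fun _ _ => funext fun _ => Complex.ext (by simp [toVecC]) (by simp [toVecC]) }

variable {n : ℕ}

def sesqFormL (A : Matrix (Fin n) (Fin n) ℂ) : (Fin n → ℂ) →L[ℝ] (Fin n → ℂ) →L[ℝ] ℂ :=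
  LinearMap.toContinuousLinearMap <| LinearMap.toContinuousLinearMap.toLinearMap ∘ₗ
    LinearMap.mk₂ ℝ (fun u v => star u ⬝ᵥ A *ᵥ v)
      (fun _ _ _ => by simp [add_dotProduct])
      (fun _ _ _ => by simp [smul_dotProduct])
      (fun _ _ _ => by simp [mulVec_add])
      (fun _ _ _ => by simp [mulVec_smul])

theorem fderiv_quadFun_apply (A : Matrix (Fin n) (Fin n) ℂ) (x v : (Fin n → ℝ) × (Fin n → ℝ)) :
    fderiv ℝ (quadFun A) x v =
      ((star (toVecC x) ⬝ᵥ A *ᵥ toVecC v).re + (star (toVecC v) ⬝ᵥ A *ᵥ toVecC x).re) / 2 := by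
  have hL := (toVecCL n).hasFDerivAt (x := x)
  have h : HasFDerivAt (quadFun A) _ x := reCLM.hasFDerivAt.comp x
    (((sesqFormL A).hasFDerivAt_of_bilinear hL hL).const_mul (1 / 2 : ℂ))
  rw [h.fderiv]
  simp [toVecCL, sesqFormL, div_eq_inv_mul, mul_add]

theorem fderiv_quadFun_apply_of_isHermitian {A : Matrix (Fin n) (Fin n) ℂ} (hA : A.IsHermitian)
    (x v : (Fin n → ℝ) × (Fin n → ℝ)) :
    fderiv ℝ (quadFun A) x v = (star (toVecC v) ⬝ᵥ A *ᵥ toVecC x).re := by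
  have hconj : star (toVecC x) ⬝ᵥ A *ᵥ toVecC v = star (star (toVecC v) ⬝ᵥ A *ᵥ toVecC x) := by
    rw [star_star_dotProduct_mulVec, hA.eq]
  rw [fderiv_quadFun_apply, hconj, star_def, conj_re]
  ring

theorem toVecC_single_zero (k : Fin n) :
    toVecC ((Pi.single k 1 : Fin n → ℝ), 0) = Pi.single k 1 := by
  funext j
  by_cases h : j = k <;> simp [toVecC, h, Complex.ext_iff]

theorem toVecC_zero_single (k : Fin n) :
    toVecC (0, (Pi.single k 1 : Fin n → ℝ)) = Pi.single k I := by
  funext j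
  by_cases h : j = k <;> simp [toVecC, h, Complex.ext_iff]

theorem fderiv_quadFun_single_zero {A : Matrix (Fin n) (Fin n) ℂ} (hA : A.IsHermitian)
    (x : (Fin n → ℝ) × (Fin n → ℝ)) (k : Fin n) :
    fderiv ℝ (quadFun A) x (Pi.single k 1, 0) = ((A *ᵥ toVecC x) k).re := by
  rw [fderiv_quadFun_apply_of_isHermitian hA, toVecC_single_zero, ← Pi.single_star,
    single_dotProduct, star_one, one_mul]

theorem fderiv_quadFun_zero_single {A : Matrix (Fin n) (Fin n) ℂ} (hA : A.IsHermitian)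
    (x : (Fin n → ℝ) × (Fin n → ℝ)) (k : Fin n) :
    fderiv ℝ (quadFun A) x (0, Pi.single k 1) = ((A *ᵥ toVecC x) k).im := by
  rw [fderiv_quadFun_apply_of_isHermitian hA, toVecC_zero_single, ← Pi.single_star,
    single_dotProduct]
  simp

theorem quadFun_smul_commutator {A B : Matrix (Fin n) (Fin n) ℂ} (hA : A.IsHermitian)
    (hB : B.IsHermitian) (x : (Fin n → ℝ) × (Fin n → ℝ)) :
    quadFun ((-I) • (A * B - B * A)) x = (star (A *ᵥ toVecC x) ⬝ᵥ B *ᵥ toVecC x).im := by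
  have hAB : star (toVecC x) ⬝ᵥ (A * B) *ᵥ toVecC x = star (A *ᵥ toVecC x) ⬝ᵥ B *ᵥ toVecC x := by
    rw [star_mulVec_dotProduct, hA.eq, mulVec_mulVec]
  have hBA : star (toVecC x) ⬝ᵥ (B * A) *ᵥ toVecC x =
      star (star (toVecC x) ⬝ᵥ (A * B) *ᵥ toVecC x) := by
    rw [star_star_dotProduct_mulVec, conjTranspose_mul, hA.eq, hB.eq]
  rw [quadFun, smul_mulVec, sub_mulVec, dotProduct_smul, dotProduct_sub, hBA, hAB, star_def,
    sub_conj]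
  simp

end QuadFun

open QuadFun in
/-- The Poisson bracket of `f_A` and `f_B` with respect to
`Ω = Σ_k ∂/∂q^k ∧ ∂/∂p_k` equals `f_{[A,B]}`, where `[A,B] = -i(AB - BA)`. -/
theorem poisson_bracket_quadFun {n : ℕ}
    (A B : Matrix (Fin n) (Fin n) ℂ) (hA : A.IsHermitian) (hB : B.IsHermitian)
    (x : (Fin n → ℝ) × (Fin n → ℝ)) :
    ∑ k : Fin n,
      (fderiv ℝ (quadFun A) x (Pi.single k 1, 0) *
         fderiv ℝ (quadFun B) x (0, Pi.single k 1) -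
       fderiv ℝ (quadFun A) x (0, Pi.single k 1) *
         fderiv ℝ (quadFun B) x (Pi.single k 1, 0))
    = quadFun ((-Complex.I) • (A * B - B * A)) x := by
  simp only [fderiv_quadFun_single_zero hA, fderiv_quadFun_single_zero hB,
    fderiv_quadFun_zero_single hA, fderiv_quadFun_zero_single hB]
  rw [quadFun_smul_commutator hA hB, im_star_dotProduct]

end
end

section
/- On ℂⁿ ≅ ℝ^{2n}, for Hermitian matrices A and B, the pairing of the Euclidean contravariant metric G = Σ_k (∂/∂q^k ⊗ ∂/∂q^k + ∂/∂p_k ⊗ ∂/∂p_k) on the differentials of the quadratic functions f_A and f_B equals f_{A∘B}, where A∘B = AB + BA is the anticommutator. -/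
open Matrix Complex

noncomputable section

/-!
Under `z = q + i p` the function `f_A` is `½ Re⟪z, A z⟫`, so for Hermitian `A` its differential
is `v ↦ Re⟪A z, v⟫`. The coordinate directions `∂/∂q^k` and `∂/∂p_k` are the vectors `e_k` and
`i e_k`, on which this differential reads `Re (A z)_k` and `Im (A z)_k`. Summing the products
over `k` gives `Re⟪A z, B z⟫`, and by the symmetry of `A` and `B` this is
`½ Re⟪z, (A B + B A) z⟫ = f_{A∘B}`.
-/

open scoped InnerProductSpace

theorem HasFDerivAt.re_inner_self_map {𝕜 E F : Type*} [RCLike 𝕜]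
    [NormedAddCommGroup F] [InnerProductSpace 𝕜 F] [NormedSpace ℝ F] [IsScalarTower ℝ 𝕜 F]
    [NormedAddCommGroup E] [NormedSpace ℝ E] {T : F →L[𝕜] F}
    (hT : (T : F →ₗ[𝕜] F).IsSymmetric) {f : E → F} {f' : E →L[ℝ] F} {x : E}
    (hf : HasFDerivAt f f' x) :
    HasFDerivAt (fun y => RCLike.re ⟪f y, T (f y)⟫_𝕜)
      ((2 : ℝ) • RCLike.reCLM.comp (((innerSL 𝕜 (T (f x))).restrictScalars ℝ).comp f')) x := by
  refine (RCLike.reCLM.hasFDerivAt.comp x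
    (hf.inner 𝕜 ((T.restrictScalars ℝ).hasFDerivAt.comp x hf))).congr_fderiv ?_
  ext v
  simp only [ContinuousLinearMap.comp_apply, fderivInnerCLM_apply, ContinuousLinearMap.prod_apply,
    ContinuousLinearMap.coe_restrictScalars', Function.comp_apply, _root_.smul_apply,
    innerSL_apply_apply, RCLike.reCLM_apply, map_add, smul_eq_mul]
  rw [← hT.apply_clm, inner_re_symm (𝕜 := 𝕜) (f' v)]
  ring

theorem LinearMap.IsSymmetric.re_inner_anticomm_apply_self {𝕜 F : Type*} [RCLike 𝕜]
    [NormedAddCommGroup F] [InnerProductSpace 𝕜 F] {S T : F →L[𝕜] F}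
    (hS : (S : F →ₗ[𝕜] F).IsSymmetric) (hT : (T : F →ₗ[𝕜] F).IsSymmetric) (z : F) :
    RCLike.re ⟪z, (S * T + T * S) z⟫_𝕜 = 2 * RCLike.re ⟪S z, T z⟫_𝕜 := by
  have hST : ⟪z, S (T z)⟫_𝕜 = ⟪S z, T z⟫_𝕜 := (hS.apply_clm z (T z)).symm
  have hTS : ⟪z, T (S z)⟫_𝕜 = ⟪T z, S z⟫_𝕜 := (hT.apply_clm z (S z)).symm
  change RCLike.re ⟪z, S (T z) + T (S z)⟫_𝕜 = _
  rw [inner_add_right, map_add, hST, hTS, inner_re_symm (𝕜 := 𝕜) (T z)]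
  ring

theorem Matrix.IsHermitian.isSymmetric_toEuclideanCLM {𝕜 ι : Type*} [RCLike 𝕜] [Fintype ι]
    [DecidableEq ι] {A : Matrix ι ι 𝕜} (hA : A.IsHermitian) :
    (toEuclideanCLM (𝕜 := 𝕜) (n := ι) A :
      EuclideanSpace 𝕜 ι →ₗ[𝕜] EuclideanSpace 𝕜 ι).IsSymmetric :=
  isSymmetric_toEuclideanLin_iff.mpr hA

namespace EuclideanSpace

variable {ι : Type*} [Fintype ι]

theorem re_inner_eq_sum (a b : EuclideanSpace ℂ ι) :
    RCLike.re ⟪a, b⟫_ℂ = ∑ k, ((a k).re * (b k).re + (a k).im * (b k).im) := by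
  simp [PiLp.inner_apply, mul_comm]

variable [DecidableEq ι]

theorem re_inner_single_one_right (w : EuclideanSpace ℂ ι) (k : ι) :
    RCLike.re ⟪w, EuclideanSpace.single k 1⟫_ℂ = (w k).re := by
  simp [EuclideanSpace.inner_single_right]

theorem re_inner_single_I_right (w : EuclideanSpace ℂ ι) (k : ι) :
    RCLike.re ⟪w, EuclideanSpace.single k I⟫_ℂ = (w k).im := by
  simp [EuclideanSpace.inner_single_right]

end EuclideanSpace

def qpToEuclidean (n : ℕ) : ((Fin n → ℝ) × (Fin n → ℝ)) →L[ℝ] EuclideanSpace ℂ (Fin n) :=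
  LinearMap.toContinuousLinearMap
    { toFun := fun x => WithLp.toLp 2 (toVecC x)
      map_add' := fun x y => by ext; simp [toVecC, Complex.ext_iff]
      map_smul' := fun c x => by ext; simp [toVecC, Complex.ext_iff] }

theorem qpToEuclidean_apply {n : ℕ} (x : (Fin n → ℝ) × (Fin n → ℝ)) :
    qpToEuclidean n x = WithLp.toLp 2 (toVecC x) := rfl

theorem qpToEuclidean_single_fst {n : ℕ} (k : Fin n) :
    qpToEuclidean n (Pi.single k 1, 0) = EuclideanSpace.single k 1 := by
  ext j
  by_cases h : j = k <;> simp [qpToEuclidean_apply, toVecC, Complex.ext_iff, h]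

theorem qpToEuclidean_single_snd {n : ℕ} (k : Fin n) :
    qpToEuclidean n (0, Pi.single k 1) = EuclideanSpace.single k I := by
  ext j
  by_cases h : j = k <;> simp [qpToEuclidean_apply, toVecC, Complex.ext_iff, h]

theorem quadFun_eq_re_inner {n : ℕ} (A : Matrix (Fin n) (Fin n) ℂ)
    (x : (Fin n → ℝ) × (Fin n → ℝ)) :
    quadFun A x =
      1 / 2 * RCLike.re ⟪qpToEuclidean n x, toEuclideanCLM (𝕜 := ℂ) A (qpToEuclidean n x)⟫_ℂ := by
  simp [quadFun, qpToEuclidean_apply, EuclideanSpace.inner_toLp_toLp, dotProduct_comm]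

theorem fderiv_quadFun_apply {n : ℕ} {A : Matrix (Fin n) (Fin n) ℂ} (hA : A.IsHermitian)
    (x v : (Fin n → ℝ) × (Fin n → ℝ)) :
    fderiv ℝ (quadFun A) x v =
      RCLike.re ⟪toEuclideanCLM (𝕜 := ℂ) A (qpToEuclidean n x), qpToEuclidean n v⟫_ℂ := by
  have hf := (((qpToEuclidean n).hasFDerivAt (x := x)).re_inner_self_map
    (T := toEuclideanCLM (𝕜 := ℂ) A) hA.isSymmetric_toEuclideanCLM).const_mul (1 / 2 : ℝ)
  rw [funext (quadFun_eq_re_inner A), hf.fderiv]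
  simp

theorem quadFun_anticomm {n : ℕ} {A B : Matrix (Fin n) (Fin n) ℂ} (hA : A.IsHermitian)
    (hB : B.IsHermitian) (x : (Fin n → ℝ) × (Fin n → ℝ)) :
    quadFun (A * B + B * A) x = RCLike.re ⟪toEuclideanCLM (𝕜 := ℂ) A (qpToEuclidean n x),
      toEuclideanCLM (𝕜 := ℂ) B (qpToEuclidean n x)⟫_ℂ := by
  rw [quadFun_eq_re_inner, map_add (toEuclideanCLM (𝕜 := ℂ) (n := Fin n)),
    map_mul (toEuclideanCLM (𝕜 := ℂ) (n := Fin n)), map_mul (toEuclideanCLM (𝕜 := ℂ) (n := Fin n)),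
    hA.isSymmetric_toEuclideanCLM.re_inner_anticomm_apply_self (T := toEuclideanCLM (𝕜 := ℂ) B)
      hB.isSymmetric_toEuclideanCLM]
  ring

/-- The pairing of the Euclidean contravariant metric
`G = Σ_k (∂/∂q^k ⊗ ∂/∂q^k + ∂/∂p_k ⊗ ∂/∂p_k)` on the differentials of `f_A`
and `f_B` equals `f_{A∘B}`, where `A∘B = AB + BA`. -/
theorem metric_pairing_quadFun {n : ℕ}
    (A B : Matrix (Fin n) (Fin n) ℂ) (hA : A.IsHermitian) (hB : B.IsHermitian)
    (x : (Fin n → ℝ) × (Fin n → ℝ)) :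
    ∑ k : Fin n,
      (fderiv ℝ (quadFun A) x (Pi.single k 1, 0) *
         fderiv ℝ (quadFun B) x (Pi.single k 1, 0) +
       fderiv ℝ (quadFun A) x (0, Pi.single k 1) *
         fderiv ℝ (quadFun B) x (0, Pi.single k 1))
    = quadFun (A * B + B * A) x := by
  simp only [fderiv_quadFun_apply hA, fderiv_quadFun_apply hB, qpToEuclidean_single_fst,
    qpToEuclidean_single_snd, EuclideanSpace.re_inner_single_one_right,
    EuclideanSpace.re_inner_single_I_right]
  rw [← EuclideanSpace.re_inner_eq_sum, quadFun_anticomm hA hB]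

end
end
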